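/- Let X be a Banach space, let Λ be a nonempty directed preordered set, and let (P_α)_{α∈Λ} be a net of norm-one projections on X such that α ≤ β implies P_α(X) ⊆ P_β(X), and such that ‖P_α* x* − x*‖ → 0 along Λ for every x* ∈ X*. If for a Banach space Y there exists a function η : (0,∞) → (0,∞) such that all the pairs (P_α(X), Y), α ∈ Λ, have the BPBp for compact operators with the function η (where P_α(X) is the range of P_α with the norm inherited from X), then the pair (X, Y) has the BPBp for compact operators. -/

import Mathlib

open MeasureTheory

noncomputable section

/-- A pair `(X, Y)` of normed spaces has the Bishop–Phelps–Bollobás property for compact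
operators with the function `η`. -/
def BPBpCompactWith (𝕜 : Type*) [RCLike 𝕜] (X Y : Type*) [NormedAddCommGroup X]
    [NormedSpace 𝕜 X] [NormedAddCommGroup Y] [NormedSpace 𝕜 Y] (η : ℝ → ℝ) : Prop :=
  ∀ ε : ℝ, 0 < ε → 0 < η ε ∧
    ∀ T : X →L[𝕜] Y, IsCompactOperator T → ‖T‖ = 1 →
      ∀ x₀ : X, ‖x₀‖ = 1 → 1 - η ε < ‖T x₀‖ →
        ∃ S : X →L[𝕜] Y, ∃ x₁ : X, IsCompactOperator S ∧ ‖S‖ = 1 ∧ ‖x₁‖ = 1 ∧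
          ‖S x₁‖ = 1 ∧ ‖x₀ - x₁‖ < ε ∧ ‖S - T‖ < ε

/-- A pair `(X, Y)` has the Bishop–Phelps–Bollobás property for compact operators. -/
def BPBpCompact (𝕜 : Type*) [RCLike 𝕜] (X Y : Type*) [NormedAddCommGroup X]
    [NormedSpace 𝕜 X] [NormedAddCommGroup Y] [NormedSpace 𝕜 Y] : Prop :=
  ∃ η : ℝ → ℝ, BPBpCompactWith 𝕜 X Y η

open Filter Metric Set Topology

/-! Since `T` is compact, `{y* ∘ T : ‖y*‖ ≤ 1}` is totally bounded in `X*`, so the pointwise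
convergence `x* ∘ P α → x*` is uniform on it and `‖T ∘ P α - T‖ → 0`. A functional vanishing on
every range is the limit of `x* ∘ P α = 0`, so the increasing union of the ranges is dense and
`x₀` is close to `Z = P α (X)` for large `α`. Normalising `T` restricted to `Z` and a point of
`Z` near `x₀` gives an almost norm-attaining pair for `(Z, Y)`; the operator `S₀` supplied by the
BPBp of `(Z, Y)` then yields `S₀ ∘ P α`, of norm one because `‖P α‖ = 1`. -/

theorem TotallyBounded.tendstoUniformlyOn_of_lipschitzWith {ι E F : Type*}
    [PseudoMetricSpace E] [PseudoMetricSpace F] {l : Filter ι} {s : Set E}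
    (hs : TotallyBounded s) {f : ι → E → F} {g : E → F} {K : NNReal}
    (hf : ∀ i, LipschitzWith K (f i)) (hg : LipschitzWith K g)
    (hfg : ∀ x, Tendsto (fun i => f i x) l (𝓝 (g x))) : TendstoUniformlyOn f g l s := by
  rw [Metric.tendstoUniformlyOn_iff]
  intro ε hε
  set r := ε / (2 * K + 1) with hr_def
  have hr : 0 < r := by positivity
  obtain ⟨t, -, ht, hst⟩ := finite_approx_of_totallyBounded hs r hr
  have hnet : ∀ᶠ i in l, ∀ y ∈ t, dist (g y) (f i y) < r :=
    ht.eventually_all.2 fun y _ => by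
      simpa only [dist_comm] using Metric.tendsto_nhds.1 (hfg y) r hr
  filter_upwards [hnet] with i hi x hx
  obtain ⟨y, hy, hxy⟩ := mem_iUnion₂.1 (hst hx)
  have hxy' : dist x y ≤ r := (mem_ball.1 hxy).le
  calc dist (g x) (f i x) ≤ dist (g x) (g y) + dist (g y) (f i y) + dist (f i y) (f i x) :=
        dist_triangle4 _ _ _ _
    _ < K * r + r + K * r := by
        have hgxy : dist (g x) (g y) ≤ K * r := (hg.dist_le_mul x y).trans (by gcongr)
        have hfxy : dist (f i y) (f i x) ≤ K * r :=
          (hf i |>.dist_le_mul y x).trans (by rw [dist_comm]; gcongr)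
        linarith [hi y hy]
    _ = ε := by rw [hr_def]; field_simp; ring

section RCLike

variable {𝕜 E X Y : Type*} [RCLike 𝕜] [NormedAddCommGroup E] [NormedSpace 𝕜 E]
  [NormedAddCommGroup X] [NormedSpace 𝕜 X] [NormedAddCommGroup Y] [NormedSpace 𝕜 Y]

theorem norm_smul_inv_norm_sub_self {v : E} (hv : v ≠ 0) :
    ‖(‖v‖⁻¹ : 𝕜) • v - v‖ = |1 - ‖v‖| := by
  have hv' : 0 < ‖v‖ := norm_pos_iff.2 hv
  calc ‖(‖v‖⁻¹ : 𝕜) • v - v‖ = ‖((‖v‖⁻¹ - 1 : ℝ) : 𝕜) • v‖ := by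
        rw [RCLike.ofReal_sub, RCLike.ofReal_inv, RCLike.ofReal_one, sub_smul, one_smul]
    _ = |(‖v‖⁻¹ - 1) * ‖v‖| := by rw [norm_smul, RCLike.norm_ofReal, abs_mul, abs_of_pos hv']
    _ = |1 - ‖v‖| := by rw [sub_mul, inv_mul_cancel₀ hv'.ne', one_mul]

theorem exists_norm_smul_eq_one_of_abs_le {v : E} {δ : ℝ} (hv : |1 - ‖v‖| ≤ δ) (hδ : δ < 1) :
    ∃ c : 𝕜, ‖c • v‖ = 1 ∧ ‖c • v - v‖ ≤ δ := by
  have hv0 : v ≠ 0 := by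
    rintro rfl
    rw [norm_zero, sub_zero, abs_one] at hv
    linarith
  exact ⟨_, norm_smul_inv_norm hv0, (norm_smul_inv_norm_sub_self hv0).trans_le hv⟩

theorem ContinuousLinearMap.opNorm_le_of_forall_norm_comp_le (A : X →L[𝕜] Y) {c : ℝ}
    (hc : 0 ≤ c) (h : ∀ g : StrongDual 𝕜 Y, ‖g‖ ≤ 1 → ‖g.comp A‖ ≤ c) : ‖A‖ ≤ c :=
  A.opNorm_le_bound hc fun x => by
    obtain ⟨g, hg, hgAx⟩ := exists_dual_vector'' 𝕜 (A x)
    calc ‖A x‖ = ‖g (A x)‖ := by rw [hgAx, RCLike.norm_ofReal, abs_norm]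
      _ ≤ ‖g.comp A‖ * ‖x‖ := (g.comp A).le_opNorm x
      _ ≤ c * ‖x‖ := by gcongr; exact h g hg

theorem Submodule.mem_topologicalClosure_of_tendsto_dual {ι : Type*} {l : Filter ι} [l.NeBot]
    {V : Submodule 𝕜 X} {u : ι → X} (hu : ∀ i, u i ∈ V) {x : X}
    (hux : ∀ φ : StrongDual 𝕜 X, Tendsto (fun i => φ (u i)) l (𝓝 (φ x))) :
    x ∈ V.topologicalClosure := by
  by_contra hx
  have := V.isClosed_topologicalClosure
  obtain ⟨ψ, hψ⟩ := SeparatingDual.exists_ne_zero (R := 𝕜)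
    ((Submodule.Quotient.mk_eq_zero V.topologicalClosure).not.2 hx)
  have hu0 : ∀ i, ψ.comp V.topologicalClosure.mkQL (u i) = 0 := fun i => by
    simp [(Submodule.Quotient.mk_eq_zero _).2 (V.le_topologicalClosure (hu i))]
  exact hψ (tendsto_nhds_unique (hux (ψ.comp V.topologicalClosure.mkQL))
    (by simpa only [hu0] using tendsto_const_nhds))

theorem norm_comp_sub_comp_le_of_approx {T : X →L[𝕜] Y} {t : Set Y} {r d : ℝ}
    (hr : 0 ≤ r) (hd : 0 ≤ d) (hTt : ∀ x : X, ‖x‖ ≤ 1 → ∃ k ∈ t, ‖T x - k‖ ≤ r)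
    {f g : StrongDual 𝕜 Y} (hf : ‖f‖ ≤ 1) (hg : ‖g‖ ≤ 1) (hfg : ∀ k ∈ t, ‖f k - g k‖ ≤ d) :
    ‖f.comp T - g.comp T‖ ≤ 2 * r + d := by
  refine ContinuousLinearMap.opNorm_le_of_unit_norm (by positivity) fun x hx => ?_
  obtain ⟨k, hk, hTxk⟩ := hTt x hx.le
  calc ‖(f.comp T - g.comp T) x‖ = ‖f (T x - k) + (f k - g k) - g (T x - k)‖ := by
        simp only [sub_apply, ContinuousLinearMap.comp_apply, map_sub]
        ring_nf
    _ ≤ ‖f (T x - k)‖ + ‖f k - g k‖ + ‖g (T x - k)‖ :=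
        (norm_sub_le _ _).trans (by gcongr; exact norm_add_le _ _)
    _ ≤ 1 * r + d + 1 * r := by
        gcongr
        · exact f.le_of_opNorm_le_of_le hf hTxk
        · exact hfg k hk
        · exact g.le_of_opNorm_le_of_le hg hTxk
    _ = 2 * r + d := by ring

theorem IsCompactOperator.totallyBounded_image_comp_closedBall {T : X →L[𝕜] Y}
    (hT : IsCompactOperator T) :
    TotallyBounded ((fun g : StrongDual 𝕜 Y => g.comp T) '' closedBall 0 1) := by
  rw [Metric.totallyBounded_iff]
  intro ε hε
  obtain ⟨K, hK, hTK⟩ := hT.image_closedBall_subset_compact 1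
  obtain ⟨t, -, ht, hKt⟩ :=
    finite_approx_of_totallyBounded hK.totallyBounded (ε / 4) (by positivity)
  have : Fintype t := ht.fintype
  let Φ : StrongDual 𝕜 Y →L[𝕜] (t → 𝕜) :=
    ContinuousLinearMap.pi fun k => ContinuousLinearMap.apply 𝕜 𝕜 (k : Y)
  have hΦ : TotallyBounded (Φ '' closedBall 0 1) :=
    (Φ.lipschitz.isBounded_image isBounded_closedBall).isCompact_closure.totallyBounded.subset
      subset_closure
  obtain ⟨F, hFB, hF, hcov⟩ := Set.exists_subset_image_finite_and.1
    (finite_approx_of_totallyBounded hΦ (ε / 4) (by positivity))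
  refine ⟨(fun g : StrongDual 𝕜 Y => g.comp T) '' F, hF.image _, ?_⟩
  rintro _ ⟨g, hg, rfl⟩
  obtain ⟨_, ⟨f, hfF, rfl⟩, hgf⟩ := mem_iUnion₂.1 (hcov ⟨g, hg, rfl⟩)
  refine mem_iUnion₂.2 ⟨f.comp T, mem_image_of_mem _ hfF, ?_⟩
  have hTt : ∀ x : X, ‖x‖ ≤ 1 → ∃ k ∈ t, ‖T x - k‖ ≤ ε / 4 := fun x hx => by
    obtain ⟨k, hk, hTxk⟩ := mem_iUnion₂.1 (hKt (hTK ⟨x, mem_closedBall_zero_iff.2 hx, rfl⟩))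
    exact ⟨k, hk, (mem_ball_iff_norm.1 hTxk).le⟩
  have hgf' : ∀ k ∈ t, ‖g k - f k‖ ≤ ε / 4 := fun k hk =>
    (norm_le_pi_norm (Φ g - Φ f) ⟨k, hk⟩).trans (mem_ball_iff_norm.1 hgf).le
  rw [mem_ball_iff_norm]
  have := norm_comp_sub_comp_le_of_approx (by positivity) (by positivity) hTt
    (mem_closedBall_zero_iff.1 hg) (mem_closedBall_zero_iff.1 (hFB hfF)) hgf'
  linarith

theorem IsCompactOperator.tendsto_comp_of_tendsto_dual_comp {ι : Type*} {l : Filter ι}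
    {T : X →L[𝕜] Y} (hT : IsCompactOperator T) {P : ι → X →L[𝕜] X} (hP : ∀ i, ‖P i‖ ≤ 1)
    (hPφ : ∀ φ : StrongDual 𝕜 X, Tendsto (fun i => φ.comp (P i)) l (𝓝 φ)) :
    Tendsto (fun i => T.comp (P i)) l (𝓝 T) := by
  have hlip : ∀ i, LipschitzWith 1 fun φ : StrongDual 𝕜 X => φ.comp (P i) := fun i =>
    LipschitzWith.of_dist_le_mul fun φ ψ => by
      simpa only [dist_eq_norm, ← ContinuousLinearMap.sub_comp, NNReal.coe_one, one_mul] using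
        (φ - ψ).opNorm_comp_le (P i) |>.trans (mul_le_of_le_one_right (norm_nonneg _) (hP i))
  have hunif := hT.totallyBounded_image_comp_closedBall.tendstoUniformlyOn_of_lipschitzWith
    hlip LipschitzWith.id hPφ
  refine Metric.tendsto_nhds.2 fun ε hε => ?_
  filter_upwards [Metric.tendstoUniformlyOn_iff.1 hunif (ε / 2) (half_pos hε)] with i hi
  rw [dist_eq_norm]
  refine lt_of_le_of_lt (ContinuousLinearMap.opNorm_le_of_forall_norm_comp_le _
    (half_pos hε).le fun g hg => ?_) (half_lt_self hε)
  have := hi _ ⟨g, mem_closedBall_zero_iff.2 hg, rfl⟩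
  rw [dist_eq_norm'] at this
  simpa only [ContinuousLinearMap.comp_sub, ContinuousLinearMap.comp_assoc, id] using this.le

theorem BPBpCompactWith.exists_approx_comp {η : ℝ → ℝ} {Z : Submodule 𝕜 X}
    (hBPB : BPBpCompactWith 𝕜 Z Y η) {Q : X →L[𝕜] Z} (hQz : ∀ z : Z, Q z = z) (hQ : ‖Q‖ ≤ 1)
    {ε : ℝ} (hε : 0 < ε) {T : Z →L[𝕜] Y} (hT : IsCompactOperator T) (hT1 : ‖T‖ = 1)
    {z₀ : Z} (hz₀ : ‖z₀‖ = 1) (hTz₀ : 1 - η ε < ‖T z₀‖) :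
    ∃ S : X →L[𝕜] Y, ∃ x₁ : X, IsCompactOperator S ∧ ‖S‖ = 1 ∧ ‖x₁‖ = 1 ∧ ‖S x₁‖ = 1 ∧
      ‖(z₀ : X) - x₁‖ < ε ∧ ‖S - T.comp Q‖ < ε := by
  obtain ⟨S₀, u₁, hS₀, hS₀1, hu₁, hS₀u₁, hz₀u₁, hS₀T⟩ := (hBPB ε hε).2 T hT hT1 z₀ hz₀ hTz₀
  have hSu₁ : S₀.comp Q u₁ = S₀ u₁ := by rw [ContinuousLinearMap.comp_apply, hQz]
  refine ⟨S₀.comp Q, u₁, hS₀.comp_clm Q, ?_, hu₁, by rw [hSu₁, hS₀u₁], hz₀u₁, ?_⟩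
  · refine le_antisymm ((S₀.opNorm_comp_le Q).trans (by rw [hS₀1, one_mul]; exact hQ)) ?_
    have := (S₀.comp Q).le_opNorm u₁
    rwa [hSu₁, hS₀u₁, show ‖(u₁ : X)‖ = 1 from hu₁, mul_one] at this
  · rw [← ContinuousLinearMap.sub_comp]
    exact ((S₀ - T).opNorm_comp_le Q).trans_lt
      ((mul_le_of_le_one_right (norm_nonneg _) hQ).trans_lt hS₀T)

theorem BPBpCompactWith.exists_approx_of_projection {η : ℝ → ℝ} {P : X →L[𝕜] X}
    (hBPB : BPBpCompactWith 𝕜 (LinearMap.range (P : X →ₗ[𝕜] X)) Y η)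
    (hproj : ∀ x, P (P x) = P x) (hP : ‖P‖ ≤ 1) {ε δ : ℝ} (hε : 0 < ε) (hδ : δ < 1)
    {T : X →L[𝕜] Y} (hT : IsCompactOperator T) (hT1 : ‖T‖ = 1) (hTP : ‖T.comp P - T‖ ≤ δ)
    {x₀ m : X} (hx₀ : ‖x₀‖ = 1) (hTx₀ : 1 - η ε + 3 * δ < ‖T x₀‖)
    (hm : m ∈ LinearMap.range (P : X →ₗ[𝕜] X)) (hx₀m : ‖x₀ - m‖ < δ) :
    ∃ S : X →L[𝕜] Y, ∃ x₁ : X, IsCompactOperator S ∧ ‖S‖ = 1 ∧ ‖x₁‖ = 1 ∧ ‖S x₁‖ = 1 ∧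
      ‖x₀ - x₁‖ < ε + 2 * δ ∧ ‖S - T‖ < ε + 2 * δ := by
  set Z := LinearMap.range (P : X →ₗ[𝕜] X)
  let Q : X →L[𝕜] Z := P.codRestrict Z fun x => ⟨x, rfl⟩
  have hQz : ∀ z : Z, Q z = z := by
    rintro ⟨_, x, rfl⟩
    exact Subtype.ext (hproj x)
  have hQ : ‖Q‖ ≤ 1 := Q.opNorm_le_bound zero_le_one fun x => P.le_of_opNorm_le hP x
  let TZ : Z →L[𝕜] Y := T.comp Z.subtypeL
  have hTZQ : TZ.comp Q = T.comp P := rfl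
  have hTZ : |1 - ‖TZ‖| ≤ δ := by
    have hle : ‖TZ‖ ≤ 1 := TZ.opNorm_le_bound zero_le_one fun z => T.le_of_opNorm_le hT1.le z
    have hge : ‖T.comp P‖ ≤ ‖TZ‖ := by
      rw [← hTZQ]
      exact (TZ.opNorm_comp_le Q).trans (mul_le_of_le_one_right (norm_nonneg _) hQ)
    rw [abs_of_nonneg (by linarith)]
    linarith [norm_sub_norm_le T (T.comp P), norm_sub_rev T (T.comp P)]
  obtain ⟨c, hT'1, hT'TZ⟩ := exists_norm_smul_eq_one_of_abs_le (𝕜 := 𝕜) hTZ hδ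
  have hm' : |1 - ‖(⟨m, hm⟩ : Z)‖| ≤ δ := by
    rw [← hx₀]
    exact (abs_norm_sub_norm_le x₀ m).trans hx₀m.le
  obtain ⟨c', hz₀, hz₀m⟩ := exists_norm_smul_eq_one_of_abs_le (𝕜 := 𝕜) hm' hδ
  set z₀ := c' • (⟨m, hm⟩ : Z)
  set T' := c • TZ
  have hx₀z₀ : ‖x₀ - z₀‖ < 2 * δ := by
    have : ‖(z₀ : X) - m‖ ≤ δ := hz₀m
    linarith [norm_sub_le_norm_sub_add_norm_sub x₀ m z₀, norm_sub_rev m z₀]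
  have hTz₀ : 1 - η ε < ‖T' z₀‖ := by
    have hsplit : T x₀ - T' z₀ = T (x₀ - z₀) - (T' - TZ) z₀ := by simp [TZ]
    have h1 := T.le_of_opNorm_le hT1.le (x₀ - z₀)
    have h2 := (T' - TZ).le_of_opNorm_le_of_le hT'TZ hz₀.le
    linarith [norm_sub_norm_le (T x₀) (T' z₀), hsplit ▸ norm_sub_le (T (x₀ - z₀)) ((T' - TZ) z₀)]
  obtain ⟨S, x₁, hS, hS1, hx₁, hSx₁, hz₀x₁, hST'⟩ :=
    hBPB.exists_approx_comp hQz hQ hε ((hT.comp_clm _).smul _) hT'1 hz₀ hTz₀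
  refine ⟨S, x₁, hS, hS1, hx₁, hSx₁, ?_, ?_⟩
  · linarith [norm_sub_le_norm_sub_add_norm_sub x₀ z₀ x₁]
  · have hsplit : S - T = (S - T'.comp Q) + (T' - TZ).comp Q + (T.comp P - T) := by
      rw [ContinuousLinearMap.sub_comp, hTZQ]
      abel
    have h2 := ((T' - TZ).opNorm_comp_le Q).trans (mul_le_of_le_one_right (norm_nonneg _) hQ)
    rw [hsplit]
    linarith [norm_add₃_le (a := S - T'.comp Q) (b := (T' - TZ).comp Q) (c := T.comp P - T)]

theorem eventually_exists_mem_range_norm_sub_lt {Λ : Type*} [Preorder Λ]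
    [IsDirected Λ (· ≤ ·)] [Nonempty Λ] {P : Λ → X →L[𝕜] X}
    (hmono : ∀ α β, α ≤ β → LinearMap.range (P α : X →ₗ[𝕜] X) ≤ LinearMap.range (P β : X →ₗ[𝕜] X))
    (hPφ : ∀ φ : StrongDual 𝕜 X, Tendsto (fun α => φ.comp (P α)) atTop (𝓝 φ))
    (x : X) {δ : ℝ} (hδ : 0 < δ) :
    ∀ᶠ α in atTop, ∃ m ∈ LinearMap.range (P α : X →ₗ[𝕜] X), ‖x - m‖ < δ := by
  have hx : x ∈ (⨆ α, LinearMap.range (P α : X →ₗ[𝕜] X)).topologicalClosure :=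
    Submodule.mem_topologicalClosure_of_tendsto_dual (u := fun α => P α x)
      (fun α => Submodule.mem_iSup_of_mem (p := fun α => LinearMap.range (P α : X →ₗ[𝕜] X)) α
        (LinearMap.mem_range_self _ x))
      fun φ => ((ContinuousLinearMap.apply 𝕜 𝕜 x).continuous.tendsto φ).comp (hPφ φ)
  have hdir : Directed (· ≤ ·) fun α => LinearMap.range (P α : X →ₗ[𝕜] X) := fun α β =>
    (directed_of (· ≤ ·) α β).imp fun γ hγ => ⟨hmono α γ hγ.1, hmono β γ hγ.2⟩
  obtain ⟨m, hm, hxm⟩ := Metric.mem_closure_iff.1 hx δ hδ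
  obtain ⟨α₁, hmα₁⟩ := (Submodule.mem_iSup_of_directed _ hdir).1 hm
  filter_upwards [eventually_ge_atTop α₁] with α hα
  exact ⟨m, hmono α₁ α hα hmα₁, by rwa [← dist_eq_norm]⟩

end RCLike

theorem bpbp_compact_of_increasing_net_of_projections_general {𝕜 : Type*} [RCLike 𝕜] {X Y : Type*}
    [NormedAddCommGroup X] [NormedSpace 𝕜 X]
    [NormedAddCommGroup Y] [NormedSpace 𝕜 Y]
    {Λ : Type*} [Preorder Λ] [IsDirected Λ (· ≤ ·)] [Nonempty Λ]
    (P : Λ → X →L[𝕜] X)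
    (hproj : ∀ α, ∀ x : X, P α (P α x) = P α x)
    (hnorm : ∀ α, ‖P α‖ = 1)
    (hmono : ∀ α β, α ≤ β → LinearMap.range (P α : X →ₗ[𝕜] X) ≤ LinearMap.range (P β : X →ₗ[𝕜] X))
    (hconv' : ∀ x' : StrongDual 𝕜 X, ∀ ε : ℝ, 0 < ε →
      ∃ α₀ : Λ, ∀ α, α₀ ≤ α → ‖x'.comp (P α) - x'‖ < ε)
    (η : ℝ → ℝ)
    (hBPB : ∀ α, BPBpCompactWith 𝕜 (↥(LinearMap.range (P α : X →ₗ[𝕜] X))) Y η) :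
    BPBpCompact 𝕜 X Y := by
  have hPφ : ∀ φ : StrongDual 𝕜 X, Tendsto (fun α => φ.comp (P α)) atTop (𝓝 φ) := fun φ =>
    Metric.tendsto_nhds.2 fun ε hε => eventually_atTop.2 <|
      (hconv' φ ε hε).imp fun _ h α hα => by rw [dist_eq_norm]; exact h α hα
  have hη : ∀ ε, 0 < ε → 0 < η ε := fun ε hε => (hBPB (Classical.arbitrary Λ) ε hε).1
  refine ⟨fun ε => η (ε / 2) / 2, fun ε hε => ⟨half_pos (hη _ (half_pos hε)), ?_⟩⟩
  intro T hT hT1 x₀ hx₀ hTx₀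
  obtain ⟨δ, hδ, hδε, hδη, hδ1⟩ : ∃ δ : ℝ, 0 < δ ∧ 4 * δ ≤ ε ∧ 6 * δ ≤ η (ε / 2) ∧ δ < 1 := by
    have := hη _ (half_pos hε)
    refine ⟨min ε (min (η (ε / 2)) 1) / 8, by positivity, ?_, ?_, ?_⟩
    · linarith [min_le_left ε (min (η (ε / 2)) 1)]
    · linarith [(min_le_right ε _).trans (min_le_left (η (ε / 2)) 1)]
    · linarith [(min_le_right ε _).trans (min_le_right (η (ε / 2)) 1)]
  obtain ⟨α, hTα, m, hm, hx₀m⟩ := (((hT.tendsto_comp_of_tendsto_dual_comp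
    (fun α => (hnorm α).le) hPφ).eventually (closedBall_mem_nhds T hδ)).and
    (eventually_exists_mem_range_norm_sub_lt hmono hPφ x₀ hδ)).exists
  obtain ⟨S, x₁, hS, hS1, hx₁, hSx₁, hx₀x₁, hST⟩ :=
    (hBPB α).exists_approx_of_projection (δ := δ) (hproj α) (hnorm α).le (half_pos hε) hδ1 hT hT1
      (by rwa [← dist_eq_norm]) hx₀ (by linarith) hm hx₀m
  exact ⟨S, x₁, hS, hS1, hx₁, hSx₁, by linarith, by linarith⟩

/-- Corollary 2.4: a net of norm-one projections with increasing ranges whose adjoints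
converge pointwise in norm to the identity transfers the BPBp for compact operators from
the ranges to the whole space. -/
theorem bpbp_compact_of_increasing_net_of_projections {𝕜 : Type*} [RCLike 𝕜] {X Y : Type*}
    [NormedAddCommGroup X] [NormedSpace 𝕜 X] [CompleteSpace X]
    [NormedAddCommGroup Y] [NormedSpace 𝕜 Y] [CompleteSpace Y]
    {Λ : Type*} [Preorder Λ] [IsDirected Λ (· ≤ ·)] [Nonempty Λ]
    (P : Λ → X →L[𝕜] X)
    (hproj : ∀ α, ∀ x : X, P α (P α x) = P α x)
    (hnorm : ∀ α, ‖P α‖ = 1)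
    (hmono : ∀ α β, α ≤ β → LinearMap.range (P α : X →ₗ[𝕜] X) ≤ LinearMap.range (P β : X →ₗ[𝕜] X))
    (hconv' : ∀ x' : StrongDual 𝕜 X, ∀ ε : ℝ, 0 < ε →
      ∃ α₀ : Λ, ∀ α, α₀ ≤ α → ‖x'.comp (P α) - x'‖ < ε)
    (η : ℝ → ℝ)
    (hBPB : ∀ α, BPBpCompactWith 𝕜 (↥(LinearMap.range (P α : X →ₗ[𝕜] X))) Y η) :
    BPBpCompact 𝕜 X Y :=
  bpbp_compact_of_increasing_net_of_projections_general P hproj hnorm hmono hconv' η hBPB
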